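/- The relation ≤ on the groupoid 𝓕 of equivalence classes of forest pairs, generated by declaring x ≤ x·s for every split s such that the product x·s is defined, is a partial order (reflexive, transitive, and antisymmetric). -/
import Mathlib


/-- Finite rooted binary trees. -/
inductive T : Type
  | leaf : T
  | node : T → T → T
  deriving DecidableEq

/-- A caret is the tree with two leaves. -/
def caret : T := T.node T.leaf T.leaf

/-- The number of leaves of a tree. -/
def T.leaves : T → ℕ
  | .leaf => 1
  | .node l r => l.leaves + r.leaves

/-- The total number of leaves of a forest (list of trees); the leaves are
ordered left to right. -/
def leavesList (f : List T) : ℕ := (f.map T.leaves).sum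

/-- Replace the `k`-th (`0`-indexed, left to right) leaf of a tree with a caret. -/
def T.expandAt : T → ℕ → T
  | .leaf, _ => caret
  | .node l r, k =>
      if k < l.leaves then .node (l.expandAt k) r
      else .node l (r.expandAt (k - l.leaves))

/-- The `k`-th simple expansion of a forest: replace its `k`-th (`0`-indexed,
left to right) leaf with a caret. -/
def expandListAt : List T → ℕ → List T
  | [], _ => []
  | t :: ts, k =>
      if k < t.leaves then t.expandAt k :: ts
      else t :: expandListAt ts (k - t.leaves)

/-- `Expands f' f` means that `f'` is an expansion of `f`, i.e. `f'` is obtained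
from `f` by applying finitely many simple expansions. -/
inductive Expands : List T → List T → Prop
  | refl (f : List T) : Expands f f
  | step {g f : List T} (k : ℕ) (hk : k < leavesList g) (h : Expands g f) :
      Expands (expandListAt g k) f

/-- The trivial forest `1_n` with `n` roots. -/
def trivialForest (n : ℕ) : List T := List.replicate n T.leaf

theorem T.leaves_pos : ∀ t : T, 0 < t.leaves
  | .leaf => Nat.one_pos
  | .node l r => Nat.add_pos_left l.leaves_pos r.leaves

theorem leavesList_trivialForest (n : ℕ) : leavesList (trivialForest n) = n := by
  simp [leavesList, trivialForest, T.leaves]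

theorem trivialForest_ne_nil {n : ℕ} (hn : n ≠ 0) : trivialForest n ≠ [] := by
  simp [trivialForest, hn]

theorem leavesList_singleton (t : T) : leavesList [t] = t.leaves := by
  simp [leavesList]

theorem expandListAt_length (f : List T) (k : ℕ) :
    (expandListAt f k).length = f.length := by
  induction f generalizing k with
  | nil => rfl
  | cons t ts ih => simp only [expandListAt]; split <;> simp [ih]

/-- A forest pair: a pair of nonempty forests with the same number of leaves. -/
def ForestPair : Type :=
  {p : List T × List T // p.1 ≠ [] ∧ p.2 ≠ [] ∧ leavesList p.1 = leavesList p.2}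

/-- One forest pair is obtained from another by a simple expansion:
the `k`-th simple expansion of a pair applies the `k`-th simple expansion
to both coordinates. -/
def PairStep (p q : ForestPair) : Prop :=
  ∃ k : ℕ, k < leavesList p.val.1 ∧
    q.val = (expandListAt p.val.1 k, expandListAt p.val.2 k)

/-- The groupoid `𝓕`: equivalence classes of forest pairs under the equivalence
relation generated by expansion. -/
def Fgpd : Type := Quot PairStep

/-- The class `[f₋, f₊] ∈ 𝓕` of a forest pair. -/
def Fgpd.mk (p : ForestPair) : Fgpd := Quot.mk PairStep p

/-- `MulDef x y z` asserts that the (partial) groupoid product `x ⬝ y` is defined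
and equal to `z`: there are representatives `x = [f₋, f₊]` and `y = [e₋, e₊]`
with `f₊ = e₋`, and then `z = [f₋, e₊]`. -/
def MulDef (x y z : Fgpd) : Prop :=
  ∃ a b : ForestPair, Fgpd.mk a = x ∧ Fgpd.mk b = y ∧ a.val.2 = b.val.1 ∧
    ∃ h : a.val.1 ≠ [] ∧ b.val.2 ≠ [] ∧ leavesList a.val.1 = leavesList b.val.2,
      Fgpd.mk ⟨(a.val.1, b.val.2), h⟩ = z

/-- A split: an element of `𝓕` of the form `[f, 1]`. -/
def IsSplit (s : Fgpd) : Prop :=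
  ∃ (f : List T) (h : f ≠ [] ∧ trivialForest (leavesList f) ≠ [] ∧
      leavesList f = leavesList (trivialForest (leavesList f))),
    s = Fgpd.mk ⟨(f, trivialForest (leavesList f)), h⟩

/-- The relation `≤` on `𝓕` generated by declaring `x ≤ x ⬝ s` for every split `s`
such that the product is defined. -/
def Fgpd.le : Fgpd → Fgpd → Prop :=
  Relation.ReflTransGen (fun x z => ∃ s : Fgpd, IsSplit s ∧ MulDef x s z)

/-- `𝓕₁ ⊆ 𝓕`: the classes `[t, f]` with `t` a tree (a one-root forest) and `f` a
forest with the same number of leaves as `t`. -/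
def InF1 (e : Fgpd) : Prop :=
  ∃ (t : T) (f : List T) (h : ([t] : List T) ≠ [] ∧ f ≠ [] ∧ leavesList [t] = leavesList f),
    e = Fgpd.mk ⟨([t], f), h⟩

/-- Membership in Thompson's group `F ⊆ 𝓕`: the classes `[t₋, t₊]` with `t₋, t₊` trees. -/
def InF (g : Fgpd) : Prop :=
  ∃ (t u : T) (h : ([t] : List T) ≠ [] ∧ ([u] : List T) ≠ [] ∧ leavesList [t] = leavesList [u]),
    g = Fgpd.mk ⟨([t], [u]), h⟩

/-! ### Auxiliary machinery for antisymmetry -/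

/-- Number of carets (internal nodes) of a tree. -/
def carets : T → ℕ
  | .leaf => 0
  | .node l r => carets l + carets r + 1

def caretsList (f : List T) : ℕ := (f.map carets).sum

theorem carets_expandAt (t : T) (k : ℕ) : carets (t.expandAt k) = carets t + 1 := by
  induction t generalizing k with
  | leaf => rfl
  | node l r ihl ihr =>
      simp only [T.expandAt]
      split <;> simp [carets, ihl, ihr] <;> omega

theorem leaves_expandAt (t : T) (k : ℕ) : (t.expandAt k).leaves = t.leaves + 1 := by
  induction t generalizing k with
  | leaf => rfl
  | node l r ihl ihr =>
      simp only [T.expandAt]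
      split <;> simp [T.leaves, ihl, ihr] <;> omega

theorem leavesList_cons (t : T) (ts : List T) :
    leavesList (t :: ts) = t.leaves + leavesList ts := by
  simp [leavesList]

theorem leavesList_expandListAt (f : List T) (k : ℕ) (hk : k < leavesList f) :
    leavesList (expandListAt f k) = leavesList f + 1 := by
  induction f generalizing k with
  | nil => simp [leavesList] at hk
  | cons t ts ih =>
      simp only [expandListAt]
      split
      · simp [leavesList_cons, leaves_expandAt]; omega
      · rw [leavesList_cons, leavesList_cons, ih]
        · omega
        · rw [leavesList_cons] at hk; omega

theorem caretsList_cons (t : T) (ts : List T) :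
    caretsList (t :: ts) = carets t + caretsList ts := by
  simp [caretsList]

theorem caretsList_expandListAt (f : List T) (k : ℕ) (hk : k < leavesList f) :
    caretsList (expandListAt f k) = caretsList f + 1 := by
  induction f generalizing k with
  | nil => simp [leavesList] at hk
  | cons t ts ih =>
      simp only [expandListAt]
      split
      · simp [caretsList_cons, carets_expandAt, leavesList_cons]; omega
      · rw [caretsList_cons, caretsList_cons, ih]
        · omega
        · rw [leavesList_cons] at hk; omega

theorem expandAt_injective : ∀ (t t' : T) (k : ℕ), k < t.leaves → k < t'.leaves →
    t.expandAt k = t'.expandAt k → t = t' := by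
  intro t
  induction t with
  | leaf =>
      intro t' k hk hk' h
      cases t' with
      | leaf => rfl
      | node l r =>
          exfalso
          have h1 := leaves_expandAt T.leaf k
          have h2 := leaves_expandAt (T.node l r) k
          rw [h] at h1
          have := l.leaves_pos
          have := r.leaves_pos
          simp [T.leaves] at h1 h2
          omega
  | node l r ihl ihr =>
      intro t' k hk hk' h
      cases t' with
      | leaf =>
          exfalso
          have h1 := leaves_expandAt (T.node l r) k
          have h2 := leaves_expandAt T.leaf k
          rw [h] at h1
          have := l.leaves_pos
          have := r.leaves_pos
          simp [T.leaves] at h1 h2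
          omega
      | node l' r' =>
          simp only [T.expandAt] at h
          by_cases h1 : k < l.leaves <;> by_cases h2 : k < l'.leaves <;>
            simp only [h1, h2, if_true, if_false, if_pos, if_neg, not_false_iff] at h
          · injection h with he1 he2
            rw [ihl l' k h1 h2 he1, he2]
          · exfalso
            injection h with he1 _
            have := leaves_expandAt l k
            rw [he1] at this
            omega
          · exfalso
            injection h with he1 _
            have := leaves_expandAt l' k
            rw [← he1] at this
            omega
          · injection h with he1 he2
            subst he1
            simp [T.leaves] at hk hk'
            rw [ihr r' (k - l.leaves) (by omega) (by omega) he2]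

theorem expandListAt_injective : ∀ (f g : List T) (k : ℕ), k < leavesList f →
    k < leavesList g → expandListAt f k = expandListAt g k → f = g := by
  intro f
  induction f with
  | nil => intro g k hk; simp [leavesList] at hk
  | cons t ts ih =>
      intro g k hk hk' h
      cases g with
      | nil => simp [leavesList] at hk'
      | cons t' ts' =>
          simp only [expandListAt] at h
          by_cases h1 : k < t.leaves <;> by_cases h2 : k < t'.leaves <;>
            simp only [h1, h2, if_true, if_false, if_pos, if_neg, not_false_iff] at h
          · injection h with he1 he2
            rw [expandAt_injective t t' k h1 h2 he1, he2]
          · exfalso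
            injection h with he1 _
            have := leaves_expandAt t k
            rw [he1] at this
            omega
          · exfalso
            injection h with he1 _
            have := leaves_expandAt t' k
            rw [← he1] at this
            omega
          · injection h with he1 he2
            subst he1
            rw [leavesList_cons] at hk hk'
            rw [ih ts' (k - t.leaves) (by omega) (by omega) he2]

/-- The caret-count invariant on `𝓕`. -/
def Ninv : Fgpd → ℤ :=
  Quot.lift (fun p : ForestPair => (caretsList p.val.2 : ℤ) - caretsList p.val.1)
    (by
      intro p q hpq
      obtain ⟨k, hk, hq⟩ := hpq
      have hk2 : k < leavesList p.val.2 := p.property.2.2 ▸ hk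
      show (caretsList p.val.2 : ℤ) - caretsList p.val.1
        = (caretsList q.val.2 : ℤ) - caretsList q.val.1
      rw [hq]
      simp only
      rw [caretsList_expandListAt _ _ hk, caretsList_expandListAt _ _ hk2]
      push_cast
      ring)

/-- The "diagonal" invariant on `𝓕`. -/
def Diag : Fgpd → Prop :=
  Quot.lift (fun p : ForestPair => p.val.1 = p.val.2)
    (by
      intro p q hpq
      obtain ⟨k, hk, hq⟩ := hpq
      have hk2 : k < leavesList p.val.2 := p.property.2.2 ▸ hk
      show (p.val.1 = p.val.2) = (q.val.1 = q.val.2)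
      rw [hq]
      simp only
      apply propext
      constructor
      · intro h; rw [h]
      · intro h; exact expandListAt_injective _ _ k hk hk2 h)

theorem carets_eq_zero {t : T} (h : carets t = 0) : t = T.leaf := by
  cases t with
  | leaf => rfl
  | node l r => simp [carets] at h

theorem caretsList_eq_zero {f : List T} (h : caretsList f = 0) :
    f = List.replicate f.length T.leaf := by
  induction f with
  | nil => rfl
  | cons t ts ih =>
      rw [caretsList_cons] at h
      have ht : carets t = 0 := by omega
      have hts : caretsList ts = 0 := by omega
      rw [carets_eq_zero ht, List.length_cons, List.replicate_succ, ← ih hts]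

theorem caretsList_trivialForest (n : ℕ) : caretsList (trivialForest n) = 0 := by
  simp [caretsList, trivialForest, carets]

theorem step_key {x z : Fgpd} (h : ∃ s : Fgpd, IsSplit s ∧ MulDef x s z) :
    Ninv z ≤ Ninv x ∧ (Ninv z = Ninv x → x = z) := by
  obtain ⟨s, ⟨f, hf, hs⟩, a, b, hax, hbs, hab, hne, hz⟩ := h
  have hNx : Ninv x = (caretsList a.val.2 : ℤ) - caretsList a.val.1 := by
    rw [← hax]; rfl
  have hNz : Ninv z = (caretsList b.val.2 : ℤ) - caretsList a.val.1 := by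
    rw [← hz]; rfl
  have hNs : Ninv s = (caretsList b.val.2 : ℤ) - caretsList b.val.1 := by
    rw [← hbs]; rfl
  have hNs' : Ninv s = -(caretsList f : ℤ) := by
    rw [hs]
    show (caretsList (trivialForest (leavesList f)) : ℤ) - caretsList f = _
    rw [caretsList_trivialForest]; ring
  have hdiff : Ninv z - Ninv x = -(caretsList f : ℤ) := by
    rw [hNz, hNx, ← hNs', hNs, hab]; ring
  constructor
  · have : (0 : ℤ) ≤ caretsList f := Int.natCast_nonneg _
    omega
  · intro heq
    have hf0 : caretsList f = 0 := by omega
    have hfr : f = List.replicate f.length T.leaf := caretsList_eq_zero hf0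
    have hfl : leavesList f = f.length := by
      rw [hfr]; simp [leavesList, T.leaves]
    have htf : trivialForest (leavesList f) = f := by
      rw [hfl, trivialForest, ← hfr]
    -- s has a diagonal representative
    have hDs : Diag s := by
      rw [hs]
      show f = trivialForest (leavesList f)
      rw [htf]
    have hDb : b.val.1 = b.val.2 := by
      have : Diag (Fgpd.mk b) = Diag s := by rw [hbs]
      show Diag (Fgpd.mk b)
      rw [this]; exact hDs
    have hb2 : b.val.2 = a.val.2 := by rw [← hDb, ← hab]
    have hval : (⟨(a.val.1, b.val.2), hne⟩ : ForestPair) = a := by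
      apply Subtype.ext
      show (a.val.1, b.val.2) = a.val
      rw [hb2]
    rw [← hz, hval, hax]

theorem le_key {x y : Fgpd} (h : Fgpd.le x y) :
    Ninv y ≤ Ninv x ∧ (Ninv y = Ninv x → x = y) := by
  induction h with
  | refl => exact ⟨le_refl _, fun _ => rfl⟩
  | tail _ hstep ih =>
      obtain ⟨h1, h2⟩ := ih
      obtain ⟨h3, h4⟩ := step_key hstep
      refine ⟨le_trans h3 h1, fun heq => ?_⟩
      have hw := le_antisymm h1 (heq ▸ h3)
      rw [h2 hw]
      exact h4 (heq.trans hw.symm)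

/-- The relation `≤` on the groupoid `𝓕`, generated by `x ≤ x ⬝ s` for splits `s`
(whenever the product is defined), is a partial order: reflexive, transitive and
antisymmetric. -/
theorem Fgpd_le_partialOrder :
    (∀ x : Fgpd, Fgpd.le x x) ∧
    (∀ x y z : Fgpd, Fgpd.le x y → Fgpd.le y z → Fgpd.le x z) ∧
    (∀ x y : Fgpd, Fgpd.le x y → Fgpd.le y x → x = y) := by
  refine ⟨fun x => Relation.ReflTransGen.refl, fun x y z => Relation.ReflTransGen.trans,
    fun x y hxy hyx => ?_⟩
  obtain ⟨h1, h2⟩ := le_key hxy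
  obtain ⟨h3, h4⟩ := le_key hyx
  exact h2 (le_antisymm h1 h3)
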